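/- arXiv:2411.11026 — 2 statements merged into one kernel-verified Lean document; each statement's English description precedes it below -/
import Mathlib

section
/- For 1 < q and nonnegative real numbers a, b, c, d with a, c > 0, the 'discrete hidden convexity' inequality: for t ∈ (0,1), setting v₃ = ((1−t)a^q + t c^q)^{1/q} and w₃ = ((1−t)b^q + t d^q)^{1/q}, one has |v₃ − w₃|^p ≤ (1−t)|a − b|^p + t|c − d|^p for all p ≥ q. -/
/-!
The weighted `L^q` mean `(∑ wᵢ fᵢ^q)^(1/q)` of nonnegative data is a seminorm-like quantity for
`q ≥ 1`: it is monotone and satisfies Minkowski's inequality, hence it is `1`-Lipschitz with respect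
to the pointwise distance `|f - g|`. Raising to the power `p ≥ q` and applying Jensen's inequality to
the convex map `x ↦ x^(p/q)` then bounds `|M_q f - M_q g|^p` by the weighted mean of `|f - g|^p`.
-/

open Finset

namespace Real

variable {ι : Type*} (s : Finset ι) (w : ι → ℝ)

noncomputable def weightedLpMean (q : ℝ) (f : ι → ℝ) : ℝ :=
  (∑ i ∈ s, w i * f i ^ q) ^ (1 / q)

variable {s w} {p q : ℝ} {f g : ι → ℝ}

theorem weightedLpMean_mono (hq : 0 ≤ q) (hw : ∀ i ∈ s, 0 ≤ w i) (hf : ∀ i ∈ s, 0 ≤ f i)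
    (hfg : ∀ i ∈ s, f i ≤ g i) : weightedLpMean s w q f ≤ weightedLpMean s w q g := by
  refine rpow_le_rpow (sum_nonneg fun i hi => mul_nonneg (hw i hi) (rpow_nonneg (hf i hi) q))
    (sum_le_sum fun i hi => ?_) (by positivity)
  exact mul_le_mul_of_nonneg_left (rpow_le_rpow (hf i hi) (hfg i hi) hq) (hw i hi)

theorem weightedLpMean_add_le (hq : 1 ≤ q) (hw : ∀ i ∈ s, 0 ≤ w i) (hf : ∀ i ∈ s, 0 ≤ f i)
    (hg : ∀ i ∈ s, 0 ≤ g i) :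
    weightedLpMean s w q (f + g) ≤ weightedLpMean s w q f + weightedLpMean s w q g := by
  have hq0 : q ≠ 0 := by positivity
  -- absorb the weights: `w * x ^ q = (w ^ (1/q) * x) ^ q`
  have absorb : ∀ h : ι → ℝ, (∀ i ∈ s, 0 ≤ h i) →
      ∑ i ∈ s, w i * h i ^ q = ∑ i ∈ s, (w i ^ (1 / q) * h i) ^ q := fun h hh =>
    sum_congr rfl fun i hi => by
      rw [mul_rpow (rpow_nonneg (hw i hi) _) (hh i hi), ← rpow_mul (hw i hi),
        one_div_mul_cancel hq0, rpow_one]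
  have minkowski := Lp_add_le_of_nonneg s hq
    (fun i hi => mul_nonneg (rpow_nonneg (hw i hi) (1 / q)) (hf i hi))
    (fun i hi => mul_nonneg (rpow_nonneg (hw i hi) (1 / q)) (hg i hi))
  simp only [← mul_add] at minkowski
  unfold weightedLpMean
  rwa [absorb f hf, absorb g hg, absorb (f + g) fun i hi => add_nonneg (hf i hi) (hg i hi)]

theorem abs_weightedLpMean_sub_le (hq : 1 ≤ q) (hw : ∀ i ∈ s, 0 ≤ w i)
    (hf : ∀ i ∈ s, 0 ≤ f i) (hg : ∀ i ∈ s, 0 ≤ g i) :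
    |weightedLpMean s w q f - weightedLpMean s w q g| ≤ weightedLpMean s w q |f - g| := by
  have hq0 : 0 ≤ q := by positivity
  have le_add_dist : ∀ {u v : ι → ℝ}, (∀ i ∈ s, 0 ≤ u i) → (∀ i ∈ s, 0 ≤ v i) →
      weightedLpMean s w q u ≤ weightedLpMean s w q v + weightedLpMean s w q |u - v| :=
    fun {u v} hu hv =>
      (weightedLpMean_mono hq0 hw hu fun i _ => by
          simp only [Pi.add_apply, Pi.abs_apply, Pi.sub_apply]
          linarith [le_abs_self (u i - v i)]).trans
        (weightedLpMean_add_le hq hw hv fun i _ => abs_nonneg _)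
  rw [abs_sub_le_iff]
  constructor
  · linarith [le_add_dist hf hg]
  · linarith [abs_sub_comm g f ▸ le_add_dist hg hf]

theorem weightedLpMean_rpow_le (hq : 0 < q) (hqp : q ≤ p) (hw : ∀ i ∈ s, 0 ≤ w i)
    (hw' : ∑ i ∈ s, w i = 1) (hf : ∀ i ∈ s, 0 ≤ f i) :
    weightedLpMean s w q f ^ p ≤ ∑ i ∈ s, w i * f i ^ p := by
  have jensen := rpow_arith_mean_le_arith_mean_rpow s w (fun i => f i ^ q) hw hw'
    (fun i hi => rpow_nonneg (hf i hi) q) ((one_le_div hq).mpr hqp)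
  unfold weightedLpMean
  rw [← rpow_mul (sum_nonneg fun i hi => mul_nonneg (hw i hi) (rpow_nonneg (hf i hi) q)),
    one_div_mul_eq_div]
  refine jensen.trans_eq (sum_congr rfl fun i hi => ?_)
  rw [← rpow_mul (hf i hi), mul_div_cancel₀ _ hq.ne']

theorem abs_weightedLpMean_sub_rpow_le (hq : 1 ≤ q) (hqp : q ≤ p) (hw : ∀ i ∈ s, 0 ≤ w i)
    (hw' : ∑ i ∈ s, w i = 1) (hf : ∀ i ∈ s, 0 ≤ f i) (hg : ∀ i ∈ s, 0 ≤ g i) :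
    |weightedLpMean s w q f - weightedLpMean s w q g| ^ p ≤ ∑ i ∈ s, w i * |f i - g i| ^ p :=
  (rpow_le_rpow (abs_nonneg _) (abs_weightedLpMean_sub_le hq hw hf hg) (by linarith)).trans
    (weightedLpMean_rpow_le (by linarith) hqp hw hw' fun i _ => abs_nonneg _)

end Real

/-- Discrete hidden convexity inequality. -/
theorem stmt_2 (p q : ℝ) (hq : 1 < q) (hpq : q ≤ p)
    (a b c d : ℝ) (ha : 0 < a) (hb : 0 ≤ b) (hc : 0 < c) (hd : 0 ≤ d)
    (t : ℝ) (ht0 : 0 < t) (ht1 : t < 1) :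
    |((1 - t) * a ^ q + t * c ^ q) ^ (1 / q) -
        ((1 - t) * b ^ q + t * d ^ q) ^ (1 / q)| ^ p ≤
      (1 - t) * |a - b| ^ p + t * |c - d| ^ p := by
  have key := Real.abs_weightedLpMean_sub_rpow_le (s := Finset.univ) (w := ![1 - t, t])
    (f := ![a, c]) (g := ![b, d]) hq.le hpq
    (by simp [Fin.forall_fin_two, ht0.le, ht1.le]) (by simp [Fin.sum_univ_two])
    (by simp [Fin.forall_fin_two, ha.le, hc.le]) (by simp [Fin.forall_fin_two, hb, hd])
  simpa [Real.weightedLpMean, Fin.sum_univ_two] using key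
end

section
/- Let 0 < s < 1, 1 < p < ∞, and let Φ(u) = (1/p) ∫∫_{ℝ^N×ℝ^N} |u(x) − u(y)|^p / |x−y|^{N+sp} dx dy on the fractional Sobolev space W^{s,p}_0(Ω). For q with 1 < q ≤ p, define Φ̂(w) = Φ(w^{1/q}) if w ≥ 0 a.e. and w^{1/q} ∈ W^{s,p}_0(Ω), and Φ̂(w) = +∞ otherwise. Then Φ̂ is convex: for u₁, u₂ in the domain of Φ̂ and t ∈ (0,1), Φ̂((1−t)u₁ + t u₂) ≤ (1−t)Φ̂(u₁) + t Φ̂(u₂). -/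
open MeasureTheory
open scoped ENNReal Classical

noncomputable section

variable {N : ℕ}

/-- The Gagliardo energy `∫∫ |u(x)-u(y)|^p / |x-y|^{N+sp} dx dy` (valued in `ℝ≥0∞`). -/
def gagliardo (N : ℕ) (s p : ℝ) (u : EuclideanSpace ℝ (Fin N) → ℝ) : ℝ≥0∞ :=
  ∫⁻ x, ∫⁻ y, ENNReal.ofReal (|u x - u y| ^ p / ‖x - y‖ ^ ((N : ℝ) + s * p))

/-- Membership in `W^{s,p}_0(Ω)`. -/
def memW0 (N : ℕ) (s p : ℝ) (Ω : Set (EuclideanSpace ℝ (Fin N)))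
    (u : EuclideanSpace ℝ (Fin N) → ℝ) : Prop :=
  MemLp u (ENNReal.ofReal p) volume ∧ gagliardo N s p u ≠ ⊤ ∧
    ∀ᵐ x, x ∉ Ω → u x = 0

/-- `Φ(u) = (1/p) [u]_{s,p}^p`. -/
def Phi (N : ℕ) (s p : ℝ) (u : EuclideanSpace ℝ (Fin N) → ℝ) : ℝ≥0∞ :=
  ENNReal.ofReal (1 / p) * gagliardo N s p u

/-- `Φ̂(w) = Φ(w^{1/q})` when `w ≥ 0` a.e. and `w^{1/q} ∈ W^{s,p}_0(Ω)`, `+∞` otherwise. -/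
def PhiHat (N : ℕ) (s p q : ℝ) (Ω : Set (EuclideanSpace ℝ (Fin N)))
    (w : EuclideanSpace ℝ (Fin N) → ℝ) : ℝ≥0∞ :=
  if (∀ᵐ x, 0 ≤ w x) ∧ memW0 N s p Ω (fun x => (w x) ^ (1 / q)) then
    Phi N s p (fun x => (w x) ^ (1 / q))
  else ⊤

/-! ### Auxiliary lemmas -/

lemma two_point_jensen {w₁ w₂ z₁ z₂ r : ℝ} (hw₁ : 0 ≤ w₁) (hw₂ : 0 ≤ w₂)
    (hw : w₁ + w₂ = 1) (hz₁ : 0 ≤ z₁) (hz₂ : 0 ≤ z₂) (hr : 1 ≤ r) :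
    (w₁ * z₁ + w₂ * z₂) ^ r ≤ w₁ * z₁ ^ r + w₂ * z₂ ^ r := by
  have h := Real.rpow_arith_mean_le_arith_mean_rpow Finset.univ ![w₁, w₂] ![z₁, z₂]
    (fun i _ => by fin_cases i <;> simpa) (by simp [Fin.sum_univ_two, hw])
    (fun i _ => by fin_cases i <;> simpa) hr
  simpa [Fin.sum_univ_two] using h

lemma rpow_inv_rpow' {q : ℝ} (hq0 : 0 < q) {x : ℝ} (hx : 0 ≤ x) :
    (x ^ (1/q)) ^ q = x := by
  rw [← Real.rpow_mul hx, one_div_mul_cancel hq0.ne', Real.rpow_one]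

lemma real_add_rpow_le {x y r : ℝ} (hx : 0 ≤ x) (hy : 0 ≤ y) (hr : 0 ≤ r) (hr1 : r ≤ 1) :
    (x + y) ^ r ≤ x ^ r + y ^ r := by
  have h := NNReal.rpow_add_le_add_rpow (x.toNNReal) (y.toNNReal) hr hr1
  have h' := NNReal.coe_le_coe.mpr h
  rwa [NNReal.coe_rpow, NNReal.coe_add, NNReal.coe_add, NNReal.coe_rpow, NNReal.coe_rpow,
    Real.coe_toNNReal _ hx, Real.coe_toNNReal _ hy] at h'

lemma key_q {q t : ℝ} (hq : 1 ≤ q) (ht0 : 0 ≤ t) (ht1 : t ≤ 1)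
    {a b c d : ℝ} (ha : 0 ≤ a) (hb : 0 ≤ b) (hc : 0 ≤ c) (hd : 0 ≤ d) :
    |((1 - t) * a + t * c) ^ (1 / q) - ((1 - t) * b + t * d) ^ (1 / q)| ≤
      ((1 - t) * |a ^ (1/q) - b ^ (1/q)| ^ q + t * |c ^ (1/q) - d ^ (1/q)| ^ q) ^ (1/q) := by
  have hq0 : 0 < q := lt_of_lt_of_le one_pos hq
  have ht' : 0 ≤ 1 - t := by linarith
  haveI : Fact (1 ≤ ENNReal.ofReal q) := ⟨by rwa [ENNReal.one_le_ofReal]⟩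
  set Q := ENNReal.ofReal q with hQ
  have hQt : Q.toReal = q := ENNReal.toReal_ofReal hq0.le
  let X : PiLp Q (fun _ : Fin 2 => ℝ) := WithLp.toLp Q ![((1-t)*a) ^ (1/q), (t*c) ^ (1/q)]
  let Y : PiLp Q (fun _ : Fin 2 => ℝ) := WithLp.toLp Q ![((1-t)*b) ^ (1/q), (t*d) ^ (1/q)]
  have hnorm : ∀ (Z : PiLp Q (fun _ : Fin 2 => ℝ)),
      ‖Z‖ = (|Z 0| ^ q + |Z 1| ^ q) ^ (1/q) := by
    intro Z
    rw [PiLp.norm_eq_sum (by rw [hQt]; exact hq0)]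
    simp [hQt, Fin.sum_univ_two, Real.norm_eq_abs]
  have habs : ∀ x : ℝ, 0 ≤ x → |x ^ (1/q)| ^ q = x := by
    intro x hx
    rw [abs_of_nonneg (Real.rpow_nonneg hx _), rpow_inv_rpow' hq0 hx]
  have hXn : ‖X‖ = ((1-t)*a + t*c) ^ (1/q) := by
    rw [hnorm X]
    show (|((1-t)*a) ^ (1/q)| ^ q + |(t*c) ^ (1/q)| ^ q) ^ (1/q) = _
    rw [habs _ (mul_nonneg ht' ha), habs _ (mul_nonneg ht0 hc)]
  have hYn : ‖Y‖ = ((1-t)*b + t*d) ^ (1/q) := by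
    rw [hnorm Y]
    show (|((1-t)*b) ^ (1/q)| ^ q + |(t*d) ^ (1/q)| ^ q) ^ (1/q) = _
    rw [habs _ (mul_nonneg ht' hb), habs _ (mul_nonneg ht0 hd)]
  have hsub : ‖X - Y‖ =
      ((1-t) * |a ^ (1/q) - b ^ (1/q)| ^ q + t * |c ^ (1/q) - d ^ (1/q)| ^ q) ^ (1/q) := by
    rw [hnorm (X - Y)]
    have h0 : (X - Y) 0 = ((1-t)*a) ^ (1/q) - ((1-t)*b) ^ (1/q) := rfl
    have h1 : (X - Y) 1 = (t*c) ^ (1/q) - (t*d) ^ (1/q) := rfl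
    rw [h0, h1, Real.mul_rpow ht' ha, Real.mul_rpow ht' hb, Real.mul_rpow ht0 hc,
      Real.mul_rpow ht0 hd, ← mul_sub, ← mul_sub, abs_mul, abs_mul,
      abs_of_nonneg (Real.rpow_nonneg ht' _), abs_of_nonneg (Real.rpow_nonneg ht0 _),
      Real.mul_rpow (Real.rpow_nonneg ht' _) (abs_nonneg _),
      Real.mul_rpow (Real.rpow_nonneg ht0 _) (abs_nonneg _),
      rpow_inv_rpow' hq0 ht', rpow_inv_rpow' hq0 ht0]
  calc |((1 - t) * a + t * c) ^ (1 / q) - ((1 - t) * b + t * d) ^ (1 / q)|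
      = |‖X‖ - ‖Y‖| := by rw [hXn, hYn]
    _ ≤ ‖X - Y‖ := abs_norm_sub_norm_le X Y
    _ = _ := hsub

/-- The discrete hidden-convexity inequality. -/
lemma key_ineq {p q t : ℝ} (hq : 1 ≤ q) (hqp : q ≤ p) (ht0 : 0 ≤ t) (ht1 : t ≤ 1)
    {a b c d : ℝ} (ha : 0 ≤ a) (hb : 0 ≤ b) (hc : 0 ≤ c) (hd : 0 ≤ d) :
    |((1 - t) * a + t * c) ^ (1 / q) - ((1 - t) * b + t * d) ^ (1 / q)| ^ p ≤
      (1 - t) * |a ^ (1/q) - b ^ (1/q)| ^ p + t * |c ^ (1/q) - d ^ (1/q)| ^ p := by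
  have hq0 : 0 < q := lt_of_lt_of_le one_pos hq
  have hp0 : 0 < p := lt_of_lt_of_le hq0 hqp
  have ht' : 0 ≤ 1 - t := by linarith
  set A := |a ^ (1/q) - b ^ (1/q)| with hA
  set B := |c ^ (1/q) - d ^ (1/q)| with hB
  have hZ : 0 ≤ (1-t) * A ^ q + t * B ^ q :=
    add_nonneg (mul_nonneg ht' (Real.rpow_nonneg (abs_nonneg _) _))
      (mul_nonneg ht0 (Real.rpow_nonneg (abs_nonneg _) _))
  calc |((1 - t) * a + t * c) ^ (1 / q) - ((1 - t) * b + t * d) ^ (1 / q)| ^ p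
      ≤ (((1-t) * A ^ q + t * B ^ q) ^ (1/q)) ^ p :=
        Real.rpow_le_rpow (abs_nonneg _) (key_q hq ht0 ht1 ha hb hc hd) hp0.le
    _ = ((1-t) * A ^ q + t * B ^ q) ^ (p / q) := by
        rw [← Real.rpow_mul hZ]; ring_nf
    _ ≤ (1-t) * (A ^ q) ^ (p/q) + t * (B ^ q) ^ (p/q) :=
        two_point_jensen ht' ht0 (by ring) (Real.rpow_nonneg (abs_nonneg _) _)
          (Real.rpow_nonneg (abs_nonneg _) _)
          ((le_div_iff₀ hq0).mpr (by linarith))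
    _ = (1-t) * A ^ p + t * B ^ p := by
        rw [← Real.rpow_mul (abs_nonneg _), ← Real.rpow_mul (abs_nonneg _),
          mul_div_cancel₀ _ hq0.ne']

lemma gagliardo_congr {s p : ℝ} {u u' : EuclideanSpace ℝ (Fin N) → ℝ}
    (h : u =ᵐ[volume] u') : gagliardo N s p u = gagliardo N s p u' := by
  refine lintegral_congr_ae ?_
  filter_upwards [h] with x hx
  refine lintegral_congr_ae ?_
  filter_upwards [h] with y hy
  rw [hx, hy]

/-- The core estimate: convexity of the Gagliardo energy along the curve, for
measurable, everywhere-nonnegative functions. -/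
lemma gagliardo_convex {s p q t : ℝ} (hs0 : 0 < s) (hp : 1 < p) (hq : 1 < q)
    (hqp : q ≤ p) (ht0 : 0 ≤ t) (ht1 : t ≤ 1)
    (h₁ h₂ : EuclideanSpace ℝ (Fin N) → ℝ) (hm₁ : Measurable h₁) (hm₂ : Measurable h₂)
    (hn₁ : ∀ x, 0 ≤ h₁ x) (hn₂ : ∀ x, 0 ≤ h₂ x) :
    gagliardo N s p (fun x => ((1 - t) * h₁ x + t * h₂ x) ^ (1/q)) ≤
      ENNReal.ofReal (1 - t) * gagliardo N s p (fun x => (h₁ x) ^ (1/q)) +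
        ENNReal.ofReal t * gagliardo N s p (fun x => (h₂ x) ^ (1/q)) := by
  have ht' : 0 ≤ 1 - t := by linarith
  set c : ℝ := (N : ℝ) + s * p with hc
  set V₁ : EuclideanSpace ℝ (Fin N) → ℝ := fun x => (h₁ x) ^ (1/q) with hV₁
  set V₂ : EuclideanSpace ℝ (Fin N) → ℝ := fun x => (h₂ x) ^ (1/q) with hV₂
  set F₁ : EuclideanSpace ℝ (Fin N) → EuclideanSpace ℝ (Fin N) → ℝ≥0∞ :=
    fun x y => ENNReal.ofReal (|V₁ x - V₁ y| ^ p / ‖x - y‖ ^ c) with hF₁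
  set F₂ : EuclideanSpace ℝ (Fin N) → EuclideanSpace ℝ (Fin N) → ℝ≥0∞ :=
    fun x y => ENNReal.ofReal (|V₂ x - V₂ y| ^ p / ‖x - y‖ ^ c) with hF₂
  have hVm : ∀ (h : EuclideanSpace ℝ (Fin N) → ℝ), Measurable h →
      Measurable (fun x => h x ^ (1/q)) := fun h hm =>
    (Real.continuous_rpow_const (by positivity)).measurable.comp hm
  have hFm : ∀ (V : EuclideanSpace ℝ (Fin N) → ℝ), Measurable V →
      Measurable (fun z : EuclideanSpace ℝ (Fin N) × EuclideanSpace ℝ (Fin N) =>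
        ENNReal.ofReal (|V z.1 - V z.2| ^ p / ‖z.1 - z.2‖ ^ c)) := by
    intro V hV
    have h1 : Measurable (fun z : EuclideanSpace ℝ (Fin N) × EuclideanSpace ℝ (Fin N) =>
        |V z.1 - V z.2| ^ p) :=
      (Real.continuous_rpow_const (by positivity)).measurable.comp
        ((hV.comp measurable_fst).sub (hV.comp measurable_snd)).abs
    have h2 : Measurable (fun z : EuclideanSpace ℝ (Fin N) × EuclideanSpace ℝ (Fin N) =>
        ‖z.1 - z.2‖ ^ c) :=
      ((continuous_fst.sub continuous_snd).norm.rpow_const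
        (fun z => Or.inr (by positivity))).measurable
    exact (h1.div h2).ennreal_ofReal
  have hF₁m := hFm V₁ (hVm h₁ hm₁)
  have hF₂m := hFm V₂ (hVm h₂ hm₂)
  have hptwise : ∀ x y,
      ENNReal.ofReal (|((1-t) * h₁ x + t * h₂ x) ^ (1/q) -
          ((1-t) * h₁ y + t * h₂ y) ^ (1/q)| ^ p / ‖x - y‖ ^ c) ≤
        ENNReal.ofReal (1-t) * F₁ x y + ENNReal.ofReal t * F₂ x y := by
    intro x y
    have hD : (0:ℝ) ≤ ‖x - y‖ ^ c := Real.rpow_nonneg (norm_nonneg _) _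
    have hkey := key_ineq hq.le hqp ht0 ht1 (hn₁ x) (hn₁ y) (hn₂ x) (hn₂ y)
    have hdiv : |((1-t) * h₁ x + t * h₂ x) ^ (1/q) -
          ((1-t) * h₁ y + t * h₂ y) ^ (1/q)| ^ p / ‖x - y‖ ^ c ≤
        (1-t) * (|V₁ x - V₁ y| ^ p / ‖x - y‖ ^ c) +
          t * (|V₂ x - V₂ y| ^ p / ‖x - y‖ ^ c) := by
      simp only [div_eq_mul_inv]
      calc |((1-t) * h₁ x + t * h₂ x) ^ (1/q) -
              ((1-t) * h₁ y + t * h₂ y) ^ (1/q)| ^ p * (‖x - y‖ ^ c)⁻¹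
          ≤ ((1-t) * |V₁ x - V₁ y| ^ p + t * |V₂ x - V₂ y| ^ p) * (‖x - y‖ ^ c)⁻¹ :=
            mul_le_mul_of_nonneg_right hkey (inv_nonneg.mpr hD)
        _ = (1-t) * (|V₁ x - V₁ y| ^ p * (‖x - y‖ ^ c)⁻¹) +
            t * (|V₂ x - V₂ y| ^ p * (‖x - y‖ ^ c)⁻¹) := by ring
    calc ENNReal.ofReal (|((1-t) * h₁ x + t * h₂ x) ^ (1/q) -
            ((1-t) * h₁ y + t * h₂ y) ^ (1/q)| ^ p / ‖x - y‖ ^ c)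
        ≤ ENNReal.ofReal ((1-t) * (|V₁ x - V₁ y| ^ p / ‖x - y‖ ^ c) +
            t * (|V₂ x - V₂ y| ^ p / ‖x - y‖ ^ c)) := ENNReal.ofReal_le_ofReal hdiv
      _ = ENNReal.ofReal (1-t) * F₁ x y + ENNReal.ofReal t * F₂ x y := by
          rw [ENNReal.ofReal_add (mul_nonneg ht' (div_nonneg
              (Real.rpow_nonneg (abs_nonneg _) _) hD))
            (mul_nonneg ht0 (div_nonneg (Real.rpow_nonneg (abs_nonneg _) _) hD)),
            ENNReal.ofReal_mul ht', ENNReal.ofReal_mul ht0]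
  have hG₁m : Measurable (fun x => ∫⁻ y, F₁ x y) := hF₁m.lintegral_prod_right'
  calc gagliardo N s p (fun x => ((1 - t) * h₁ x + t * h₂ x) ^ (1/q))
      ≤ ∫⁻ x, (ENNReal.ofReal (1-t) * ∫⁻ y, F₁ x y) +
          ENNReal.ofReal t * ∫⁻ y, F₂ x y := by
        refine lintegral_mono fun x => ?_
        calc (∫⁻ y, ENNReal.ofReal (|((1-t) * h₁ x + t * h₂ x) ^ (1/q) -
                ((1-t) * h₁ y + t * h₂ y) ^ (1/q)| ^ p / ‖x - y‖ ^ c))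
            ≤ ∫⁻ y, (ENNReal.ofReal (1-t) * F₁ x y + ENNReal.ofReal t * F₂ x y) :=
              lintegral_mono fun y => hptwise x y
          _ = (ENNReal.ofReal (1-t) * ∫⁻ y, F₁ x y) +
              ENNReal.ofReal t * ∫⁻ y, F₂ x y := by
              have hmm : Measurable (fun y => ENNReal.ofReal (1-t) * F₁ x y) :=
                (hF₁m.comp measurable_prodMk_left).const_mul _
              rw [lintegral_add_left hmm,
                lintegral_const_mul' _ _ ENNReal.ofReal_ne_top,
                lintegral_const_mul' _ _ ENNReal.ofReal_ne_top]
    _ = ENNReal.ofReal (1-t) * gagliardo N s p V₁ +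
        ENNReal.ofReal t * gagliardo N s p V₂ := by
        have hmm : Measurable (fun x => ENNReal.ofReal (1-t) * ∫⁻ y, F₁ x y) :=
          hG₁m.const_mul _
        rw [lintegral_add_left hmm,
          lintegral_const_mul' _ _ ENNReal.ofReal_ne_top,
          lintegral_const_mul' _ _ ENNReal.ofReal_ne_top]
        rfl

/-- The operator `Φ̂` is convex. -/
theorem stmt_3 (s p q : ℝ) (hs0 : 0 < s) (hs1 : s < 1) (hp : 1 < p) (hq : 1 < q)
    (hqp : q ≤ p) (Ω : Set (EuclideanSpace ℝ (Fin N))) (hΩ : Bornology.IsBounded Ω)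
    (u₁ u₂ : EuclideanSpace ℝ (Fin N) → ℝ)
    (h₁ : PhiHat N s p q Ω u₁ ≠ ⊤) (h₂ : PhiHat N s p q Ω u₂ ≠ ⊤)
    (t : ℝ) (ht0 : 0 < t) (ht1 : t < 1) :
    PhiHat N s p q Ω (fun x => (1 - t) * u₁ x + t * u₂ x) ≤
      ENNReal.ofReal (1 - t) * PhiHat N s p q Ω u₁ +
        ENNReal.ofReal t * PhiHat N s p q Ω u₂ := by
  have hq0 : 0 < q := lt_trans one_pos hq
  have hp0 : 0 < p := lt_trans one_pos hp
  have hiq0 : (0:ℝ) ≤ 1/q := by positivity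
  have hiq1 : (1:ℝ)/q ≤ 1 := by
    rw [div_le_one hq0]; linarith
  have ht' : (0:ℝ) ≤ 1 - t := by linarith
  -- extract the domain conditions
  have H₁ : (∀ᵐ x, 0 ≤ u₁ x) ∧ memW0 N s p Ω (fun x => (u₁ x) ^ (1 / q)) := by
    by_contra h; exact h₁ (by rw [PhiHat, if_neg h])
  have H₂ : (∀ᵐ x, 0 ≤ u₂ x) ∧ memW0 N s p Ω (fun x => (u₂ x) ^ (1 / q)) := by
    by_contra h; exact h₂ (by rw [PhiHat, if_neg h])
  obtain ⟨hpos₁, hmem₁⟩ := H₁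
  obtain ⟨hpos₂, hmem₂⟩ := H₂
  rw [memW0] at hmem₁ hmem₂
  obtain ⟨hLp₁, hfin₁, hzero₁⟩ := hmem₁
  obtain ⟨hLp₂, hfin₂, hzero₂⟩ := hmem₂
  set v₁ : EuclideanSpace ℝ (Fin N) → ℝ := fun x => (u₁ x) ^ (1/q) with hv₁
  set v₂ : EuclideanSpace ℝ (Fin N) → ℝ := fun x => (u₂ x) ^ (1/q) with hv₂
  set v₃ : EuclideanSpace ℝ (Fin N) → ℝ :=
    fun x => ((1-t) * u₁ x + t * u₂ x) ^ (1/q) with hv₃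
  -- measurable nonnegative representatives
  obtain ⟨g₁, hg₁m, hg₁e⟩ := hLp₁.1.aemeasurable
  obtain ⟨g₂, hg₂m, hg₂e⟩ := hLp₂.1.aemeasurable
  set h1f : EuclideanSpace ℝ (Fin N) → ℝ := fun x => |g₁ x| ^ q with hh1f
  set h2f : EuclideanSpace ℝ (Fin N) → ℝ := fun x => |g₂ x| ^ q with hh2f
  have hm1f : Measurable h1f :=
    (Real.continuous_rpow_const hq0.le).measurable.comp hg₁m.abs
  have hm2f : Measurable h2f :=
    (Real.continuous_rpow_const hq0.le).measurable.comp hg₂m.abs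
  have hn1f : ∀ x, 0 ≤ h1f x := fun x => Real.rpow_nonneg (abs_nonneg _) _
  have hn2f : ∀ x, 0 ≤ h2f x := fun x => Real.rpow_nonneg (abs_nonneg _) _
  have hu₁e : u₁ =ᵐ[volume] h1f := by
    filter_upwards [hpos₁, hg₁e] with x hx he
    show u₁ x = |g₁ x| ^ q
    rw [← he]
    show u₁ x = |u₁ x ^ (1/q)| ^ q
    rw [abs_of_nonneg (Real.rpow_nonneg hx _), rpow_inv_rpow' hq0 hx]
  have hu₂e : u₂ =ᵐ[volume] h2f := by
    filter_upwards [hpos₂, hg₂e] with x hx he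
    show u₂ x = |g₂ x| ^ q
    rw [← he]
    show u₂ x = |u₂ x ^ (1/q)| ^ q
    rw [abs_of_nonneg (Real.rpow_nonneg hx _), rpow_inv_rpow' hq0 hx]
  have hV₁e : v₁ =ᵐ[volume] (fun x => (h1f x) ^ (1/q)) := by
    filter_upwards [hu₁e] with x hx
    show u₁ x ^ (1/q) = h1f x ^ (1/q); rw [hx]
  have hV₂e : v₂ =ᵐ[volume] (fun x => (h2f x) ^ (1/q)) := by
    filter_upwards [hu₂e] with x hx
    show u₂ x ^ (1/q) = h2f x ^ (1/q); rw [hx]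
  have hV₃e : v₃ =ᵐ[volume] (fun x => ((1-t) * h1f x + t * h2f x) ^ (1/q)) := by
    filter_upwards [hu₁e, hu₂e] with x hx hy
    show ((1-t) * u₁ x + t * u₂ x) ^ (1/q) = _
    rw [hx, hy]
  have hmV₃f : Measurable (fun x => ((1-t) * h1f x + t * h2f x) ^ (1/q)) :=
    (Real.continuous_rpow_const hiq0).measurable.comp
      (((hm1f.const_mul _).add (hm2f.const_mul _)))
  -- the core Gagliardo estimate
  have hgag₃ : gagliardo N s p v₃ ≤
      ENNReal.ofReal (1-t) * gagliardo N s p v₁ + ENNReal.ofReal t * gagliardo N s p v₂ := by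
    rw [gagliardo_congr hV₃e, gagliardo_congr hV₁e, gagliardo_congr hV₂e]
    exact gagliardo_convex hs0 hp hq hqp ht0.le ht1.le h1f h2f hm1f hm2f hn1f hn2f
  have hgagfin : gagliardo N s p v₃ ≠ ⊤ :=
    ne_top_of_le_ne_top (ENNReal.add_ne_top.mpr
      ⟨ENNReal.mul_ne_top ENNReal.ofReal_ne_top hfin₁,
       ENNReal.mul_ne_top ENNReal.ofReal_ne_top hfin₂⟩) hgag₃
  -- Memℒp of v₃
  have hsm₃ : AEStronglyMeasurable v₃ volume :=
    hmV₃f.aestronglyMeasurable.congr hV₃e.symm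
  have hLpg : MemLp (fun x => (1-t)^(1/q) * v₁ x + t^(1/q) * v₂ x)
      (ENNReal.ofReal p) volume := (hLp₁.const_mul _).add (hLp₂.const_mul _)
  have hLp₃ : MemLp v₃ (ENNReal.ofReal p) volume := by
    refine hLpg.of_le hsm₃ ?_
    filter_upwards [hpos₁, hpos₂] with x hx1 hx2
    have hg0 : 0 ≤ (1-t)^(1/q) * v₁ x + t^(1/q) * v₂ x :=
      add_nonneg (mul_nonneg (Real.rpow_nonneg ht' _) (Real.rpow_nonneg hx1 _))
        (mul_nonneg (Real.rpow_nonneg ht0.le _) (Real.rpow_nonneg hx2 _))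
    rw [Real.norm_eq_abs, Real.norm_eq_abs,
      abs_of_nonneg (Real.rpow_nonneg (add_nonneg (mul_nonneg ht' hx1)
        (mul_nonneg ht0.le hx2)) _), abs_of_nonneg hg0]
    calc ((1-t) * u₁ x + t * u₂ x) ^ (1/q)
        ≤ ((1-t) * u₁ x) ^ (1/q) + (t * u₂ x) ^ (1/q) :=
          real_add_rpow_le (mul_nonneg ht' hx1) (mul_nonneg ht0.le hx2) hiq0 hiq1
      _ = (1-t)^(1/q) * v₁ x + t^(1/q) * v₂ x := by
          rw [Real.mul_rpow ht' hx1, Real.mul_rpow ht0.le hx2]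
  -- vanishing outside Ω
  have hzero₃ : ∀ᵐ x, x ∉ Ω → v₃ x = 0 := by
    filter_upwards [hzero₁, hzero₂, hpos₁, hpos₂] with x hz1 hz2 hx1 hx2 hxΩ
    have hu1 : u₁ x = 0 := by
      rw [← rpow_inv_rpow' hq0 hx1, hz1 hxΩ, Real.zero_rpow hq0.ne']
    have hu2 : u₂ x = 0 := by
      rw [← rpow_inv_rpow' hq0 hx2, hz2 hxΩ, Real.zero_rpow hq0.ne']
    show ((1-t) * u₁ x + t * u₂ x) ^ (1/q) = 0
    rw [hu1, hu2, mul_zero, mul_zero, add_zero,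
      Real.zero_rpow (by positivity : (1:ℝ)/q ≠ 0)]
  -- nonnegativity of the combination
  have hpos₃ : ∀ᵐ x, 0 ≤ (1-t) * u₁ x + t * u₂ x := by
    filter_upwards [hpos₁, hpos₂] with x hx1 hx2
    exact add_nonneg (mul_nonneg ht' hx1) (mul_nonneg ht0.le hx2)
  have H₃ : (∀ᵐ x, 0 ≤ (1-t) * u₁ x + t * u₂ x) ∧
      memW0 N s p Ω (fun x => ((1-t) * u₁ x + t * u₂ x) ^ (1/q)) :=
    ⟨hpos₃, by rw [memW0]; exact ⟨hLp₃, hgagfin, hzero₃⟩⟩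
  -- conclude
  simp only [PhiHat]
  rw [if_pos H₃, if_pos (⟨hpos₁, hLp₁, hfin₁, hzero₁⟩ : _ ∧ memW0 N s p Ω _), if_pos (⟨hpos₂, hLp₂, hfin₂, hzero₂⟩ : _ ∧ memW0 N s p Ω _)]
  simp only [Phi]
  calc ENNReal.ofReal (1/p) * gagliardo N s p v₃
      ≤ ENNReal.ofReal (1/p) *
        (ENNReal.ofReal (1-t) * gagliardo N s p v₁ +
          ENNReal.ofReal t * gagliardo N s p v₂) := mul_le_mul_right hgag₃ _
    _ = ENNReal.ofReal (1-t) * (ENNReal.ofReal (1/p) * gagliardo N s p v₁) +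
        ENNReal.ofReal t * (ENNReal.ofReal (1/p) * gagliardo N s p v₂) := by ring

end
end
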